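/- arXiv:gr-qc/0404041 — 4 statements merged into one kernel-verified Lean document; each statement's English description precedes it below -/
import Mathlib

section
/- Let A and G be real 6×6 matrices, B a real 8×8 matrix, and let K (6×8), M (6×6), N (8×6), Q (8×6) be arbitrary real matrices. Let Δ be the 40×40 block matrix with block rows and columns of sizes (6,6,8,8,6,6) given by Δ = [[0, A, 0, 0, 0, 0], [−Aᵀ, 0, 0, K, 0, M], [0, 0, 0, B, 0, N], [0, −Kᵀ, −Bᵀ, 0, 0, Q], [0, 0, 0, 0, 0, G], [0, −Mᵀ, −Nᵀ, −Qᵀ, −Gᵀ, 0]]. Then det Δ = (det A)² (det B)² (det G)²; in particular the determinant is independent of K, M, N and Q. -/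
open Matrix

set_option maxRecDepth 4000

abbrev diracγ := Fin 6 ⊕ Fin 8 ⊕ Fin 6

/-- Reordering of the 6 blocks as (1,3,5 | 2,4,6). -/
def diracEquiv : (diracγ ⊕ diracγ) ≃ (Fin 6 ⊕ Fin 6 ⊕ Fin 8 ⊕ Fin 8 ⊕ Fin 6 ⊕ Fin 6) where
  toFun x := match x with
    | .inl (.inl i) => .inl i
    | .inl (.inr (.inl i)) => .inr (.inr (.inl i))
    | .inl (.inr (.inr i)) => .inr (.inr (.inr (.inr (.inl i))))
    | .inr (.inl i) => .inr (.inl i)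
    | .inr (.inr (.inl i)) => .inr (.inr (.inr (.inl i)))
    | .inr (.inr (.inr i)) => .inr (.inr (.inr (.inr (.inr i))))
  invFun x := match x with
    | .inl i => .inl (.inl i)
    | .inr (.inl i) => .inr (.inl i)
    | .inr (.inr (.inl i)) => .inl (.inr (.inl i))
    | .inr (.inr (.inr (.inl i))) => .inr (.inr (.inl i))
    | .inr (.inr (.inr (.inr (.inl i)))) => .inl (.inr (.inr i))
    | .inr (.inr (.inr (.inr (.inr i)))) => .inr (.inr (.inr i))
  left_inv x := by rcases x with ((i|i|i)|(i|i|i)) <;> rfl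
  right_inv x := by rcases x with (i|i|i|i|i|i) <;> rfl

lemma det_J {R : Type*} [CommRing R] {γ : Type*} [DecidableEq γ] [Fintype γ]
    (h : Even (Fintype.card γ)) :
    (fromBlocks (0 : Matrix γ γ R) (1 : Matrix γ γ R) (1 : Matrix γ γ R)
      (0 : Matrix γ γ R)).det = 1 := by
  have key : fromBlocks (1 : Matrix γ γ R) (1 : Matrix γ γ R) (0 : Matrix γ γ R) (1 : Matrix γ γ R)
      * fromBlocks (0 : Matrix γ γ R) (1 : Matrix γ γ R) (1 : Matrix γ γ R) (0 : Matrix γ γ R)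
      = fromBlocks (1 : Matrix γ γ R) (1 : Matrix γ γ R) (1 : Matrix γ γ R) (0 : Matrix γ γ R) := by
    rw [fromBlocks_multiply]; simp
  have h1 : (fromBlocks (1 : Matrix γ γ R) (1 : Matrix γ γ R) (1 : Matrix γ γ R)
      (0 : Matrix γ γ R)).det = 1 := by
    rw [det_fromBlocks_one₁₁]
    simp [Matrix.det_neg, h.neg_one_pow]
  have h2 := congrArg Matrix.det key
  rw [det_mul, det_fromBlocks_zero₂₁, h1] at h2
  simpa using h2

lemma det_fromBlocks_zero₁₁' {R : Type*} [CommRing R] {γ : Type*} [DecidableEq γ] [Fintype γ]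
    (h : Even (Fintype.card γ)) (U V W : Matrix γ γ R) :
    (fromBlocks (0 : Matrix γ γ R) U V W).det = U.det * V.det := by
  have hfact : fromBlocks (0 : Matrix γ γ R) U V W
      = fromBlocks U 0 W V * fromBlocks (0 : Matrix γ γ R) (1 : Matrix γ γ R)
        (1 : Matrix γ γ R) (0 : Matrix γ γ R) := by
    rw [fromBlocks_multiply]; simp
  rw [hfact, det_mul, det_J h, det_fromBlocks_zero₁₂, mul_one]

/-- Generic determinant computation for the Dirac-type block structure. Stated with
all zero and transposed blocks as variables (pinned by equations) so that it can be
instantiated at `ℝ` without expensive instance unfolding. -/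
lemma det_aux {R : Type*} [CommRing R] {α β χ n : Type*}
    [DecidableEq α] [Fintype α] [DecidableEq β] [Fintype β] [DecidableEq χ] [Fintype χ]
    [DecidableEq n] [Fintype n]
    (h : Even (Fintype.card α + Fintype.card β + Fintype.card χ))
    (A A' : Matrix α α R) (B B' : Matrix β β R) (G G' : Matrix χ χ R)
    (X : Matrix β χ R) (Y : Matrix χ β R)
    (Z W : Matrix (α ⊕ β ⊕ χ) (α ⊕ β ⊕ χ) R)
    (Z₁ : Matrix α (β ⊕ χ) R) (Z₂ : Matrix (β ⊕ χ) α R) (Z₃ : Matrix χ β R)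
    (Z₄ : Matrix α (β ⊕ χ) R) (Z₅ : Matrix (β ⊕ χ) α R) (Z₆ : Matrix β χ R)
    (Δ : Matrix n n R) (e : ((α ⊕ β ⊕ χ) ⊕ (α ⊕ β ⊕ χ)) ≃ n)
    (hsub : Δ.submatrix e e
      = fromBlocks Z (fromBlocks A Z₁ Z₂ (fromBlocks B X Z₃ G))
          (fromBlocks A' Z₄ Z₅ (fromBlocks B' Z₆ Y G')) W)
    (hZ : Z = 0) (hZ₁ : Z₁ = 0) (hZ₂ : Z₂ = 0) (hZ₃ : Z₃ = 0)
    (hZ₄ : Z₄ = 0) (hZ₅ : Z₅ = 0) (hZ₆ : Z₆ = 0)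
    (hA' : A' = -Aᵀ) (hB' : B' = -Bᵀ) (hG' : G' = -Gᵀ) :
    Δ.det = A.det ^ 2 * B.det ^ 2 * G.det ^ 2 := by
  subst hZ hZ₁ hZ₂ hZ₃ hZ₄ hZ₅ hZ₆ hA' hB' hG'
  have hcard : Even (Fintype.card (α ⊕ β ⊕ χ)) := by
    simpa [Fintype.card_sum, add_assoc] using h
  rw [← det_submatrix_equiv_self e, hsub, det_fromBlocks_zero₁₁' hcard,
    det_fromBlocks_zero₂₁, det_fromBlocks_zero₂₁, det_fromBlocks_zero₁₂, det_fromBlocks_zero₁₂,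
    det_neg, det_neg, det_neg, det_transpose, det_transpose, det_transpose]
  have hpow : (-1 : R) ^ Fintype.card α * (-1 : R) ^ Fintype.card β
      * (-1 : R) ^ Fintype.card χ = 1 := by
    rw [← pow_add, ← pow_add]
    exact h.neg_one_pow
  linear_combination (A.det ^ 2 * B.det ^ 2 * G.det ^ 2) * hpow


/-- The Dirac matrix of second-class constraints of Plebanski theory, a 40×40
antisymmetric block matrix with block rows/columns of sizes (6,6,8,8,6,6). -/
def diracBlockMatrix (A G : Matrix (Fin 6) (Fin 6) ℝ) (B : Matrix (Fin 8) (Fin 8) ℝ)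
    (K : Matrix (Fin 6) (Fin 8) ℝ) (M : Matrix (Fin 6) (Fin 6) ℝ)
    (N Q : Matrix (Fin 8) (Fin 6) ℝ) :
    Matrix (Fin 6 ⊕ Fin 6 ⊕ Fin 8 ⊕ Fin 8 ⊕ Fin 6 ⊕ Fin 6)
      (Fin 6 ⊕ Fin 6 ⊕ Fin 8 ⊕ Fin 8 ⊕ Fin 6 ⊕ Fin 6) ℝ :=
  Matrix.of fun i j =>
    match i, j with
    | .inl i, .inr (.inl j) => A i j
    | .inr (.inl i), .inl j => -A j i
    | .inr (.inl i), .inr (.inr (.inr (.inl j))) => K i j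
    | .inr (.inl i), .inr (.inr (.inr (.inr (.inr j)))) => M i j
    | .inr (.inr (.inl i)), .inr (.inr (.inr (.inl j))) => B i j
    | .inr (.inr (.inl i)), .inr (.inr (.inr (.inr (.inr j)))) => N i j
    | .inr (.inr (.inr (.inl i))), .inr (.inl j) => -K j i
    | .inr (.inr (.inr (.inl i))), .inr (.inr (.inl j)) => -B j i
    | .inr (.inr (.inr (.inl i))), .inr (.inr (.inr (.inr (.inr j)))) => Q i j
    | .inr (.inr (.inr (.inr (.inl i)))), .inr (.inr (.inr (.inr (.inr j)))) => G i j
    | .inr (.inr (.inr (.inr (.inr i)))), .inr (.inl j) => -M j i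
    | .inr (.inr (.inr (.inr (.inr i)))), .inr (.inr (.inl j)) => -N j i
    | .inr (.inr (.inr (.inr (.inr i)))), .inr (.inr (.inr (.inl j))) => -Q j i
    | .inr (.inr (.inr (.inr (.inr i)))), .inr (.inr (.inr (.inr (.inl j)))) => -G j i
    | _, _ => 0

lemma diracBlockMatrix_submatrix (A G : Matrix (Fin 6) (Fin 6) ℝ)
    (B : Matrix (Fin 8) (Fin 8) ℝ) (K : Matrix (Fin 6) (Fin 8) ℝ)
    (M : Matrix (Fin 6) (Fin 6) ℝ) (N Q : Matrix (Fin 8) (Fin 6) ℝ) :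
    (diracBlockMatrix A G B K M N Q).submatrix diracEquiv diracEquiv
      = fromBlocks 0 (fromBlocks A 0 0 (fromBlocks B N 0 G))
        (fromBlocks (-Aᵀ) 0 0 (fromBlocks (-Bᵀ) 0 (-Nᵀ) (-Gᵀ)))
        (fromBlocks 0 (fromCols K M) (fromRows (-Kᵀ) (-Mᵀ)) (fromBlocks 0 Q (-Qᵀ) 0)) := by
  ext i j
  rcases i with ((i|i|i)|(i|i|i)) <;> rcases j with ((j|j|j)|(j|j|j)) <;> rfl

/-- The determinant of the Dirac block matrix equals `(det A)² (det B)² (det G)²`;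
in particular it is independent of the blocks `K`, `M`, `N`, `Q`. -/
theorem det_diracBlockMatrix (A G : Matrix (Fin 6) (Fin 6) ℝ)
    (B : Matrix (Fin 8) (Fin 8) ℝ) (K : Matrix (Fin 6) (Fin 8) ℝ)
    (M : Matrix (Fin 6) (Fin 6) ℝ) (N Q : Matrix (Fin 8) (Fin 6) ℝ) :
    (diracBlockMatrix A G B K M N Q).det = A.det ^ 2 * B.det ^ 2 * G.det ^ 2 := by
  exact det_aux (by decide) A (-Aᵀ) B (-Bᵀ) G (-Gᵀ) N (-Nᵀ) _ _ _ _ _ _ _ _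
    (diracBlockMatrix A G B K M N Q) diracEquiv
    (diracBlockMatrix_submatrix A G B K M N Q)
    rfl rfl rfl rfl rfl rfl rfl rfl rfl rfl
end

section
/- Let g be a real symmetric 3×3 matrix and V a real number. Define the endomorphism Φ of the 6-dimensional real vector space of symmetric 3×3 matrices by Φ(S)_{uv} := V Σ_{k,l,i,j} ε_{kiu} ε_{ljv} g_{kl} S_{ij} (for symmetric S and symmetric g the output is again symmetric in (u,v)). Then det Φ = −2 V⁶ (det g)². In particular Φ is invertible if and only if V ≠ 0 and g is invertible. -/
noncomputable section

/-- The Levi-Civita symbol on `{1,2,3}` (here indexed by `Fin 3`), with `ε 0 1 2 = 1`. -/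
def lev (a b c : Fin 3) : ℝ :=
  (((b.val : ℝ) - a.val) * ((c.val : ℝ) - a.val) * ((c.val : ℝ) - b.val)) / 2

/-- The 6-dimensional real vector space of symmetric 3×3 real matrices,
as a submodule of the space of all 3×3 matrices. -/
def symMat : Submodule ℝ (Matrix (Fin 3) (Fin 3) ℝ) where
  carrier := {S | S.IsSymm}
  add_mem' := fun hS hT => hS.add hT
  zero_mem' := Matrix.isSymm_zero
  smul_mem' := fun c _ hS => hS.smul c

/-!
In the coordinates `(S₀₀, S₁₁, S₂₂, S₀₁, S₀₂, S₁₂)` of a symmetric matrix, the contraction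
`S ↦ ∑ ε ε g S` has an explicit `6 × 6` matrix whose determinant is `-2 (det g)²`. Scaling by `V`
multiplies the determinant by `V⁶`, and an endomorphism of a finite-dimensional space is bijective
exactly when its determinant is nonzero.
-/

open Matrix

def epsContraction (g : Matrix (Fin 3) (Fin 3) ℝ) :
    Matrix (Fin 3) (Fin 3) ℝ →ₗ[ℝ] Matrix (Fin 3) (Fin 3) ℝ where
  toFun S := Matrix.of fun u v => ∑ k, ∑ l, ∑ i, ∑ j, lev k i u * lev l j v * g k l * S i j
  map_add' S T := by
    ext u v
    simp only [of_apply, Matrix.add_apply, mul_add, Finset.sum_add_distrib]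
  map_smul' c S := by
    ext u v
    simp only [of_apply, Matrix.smul_apply, smul_eq_mul, RingHom.id_apply, Finset.mul_sum,
      mul_assoc, mul_left_comm _ c]

theorem epsContraction_apply (g S : Matrix (Fin 3) (Fin 3) ℝ) (u v : Fin 3) :
    epsContraction g S u v = ∑ k, ∑ l, ∑ i, ∑ j, lev k i u * lev l j v * g k l * S i j := rfl

theorem Matrix.IsSymm.epsContraction {g S : Matrix (Fin 3) (Fin 3) ℝ} (hg : g.IsSymm)
    (hS : S.IsSymm) : (epsContraction g S).IsSymm := by
  refine IsSymm.ext fun u v => ?_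
  simp only [epsContraction_apply]
  rw [Finset.sum_comm]
  refine Finset.sum_congr rfl fun k _ => Finset.sum_congr rfl fun l _ => ?_
  rw [Finset.sum_comm]
  refine Finset.sum_congr rfl fun i _ => Finset.sum_congr rfl fun j _ => ?_
  rw [hg.apply k l, hS.apply i j]
  ring

def symContraction {g : Matrix (Fin 3) (Fin 3) ℝ} (hg : g.IsSymm) : symMat →ₗ[ℝ] symMat :=
  (epsContraction g).restrict fun _ hS => hg.epsContraction hS

theorem symContraction_apply_coe {g : Matrix (Fin 3) (Fin 3) ℝ} (hg : g.IsSymm) (S : symMat) :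
    (symContraction hg S : Matrix (Fin 3) (Fin 3) ℝ) = epsContraction g S := rfl

def symMatEquiv : symMat ≃ₗ[ℝ] (Fin 6 → ℝ) where
  toFun S := ![S.1 0 0, S.1 1 1, S.1 2 2, S.1 0 1, S.1 0 2, S.1 1 2]
  invFun c := ⟨!![c 0, c 3, c 4; c 3, c 1, c 5; c 4, c 5, c 2],
    IsSymm.ext fun i j => by fin_cases i <;> fin_cases j <;> rfl⟩
  map_add' S T := by ext i; fin_cases i <;> rfl
  map_smul' c S := by ext i; fin_cases i <;> rfl
  left_inv S := by
    have hS : S.1.IsSymm := S.2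
    ext i j
    fin_cases i <;> fin_cases j <;> simp <;> exact hS.apply _ _
  right_inv c := by ext i; fin_cases i <;> rfl

theorem symMatEquiv_apply (S : symMat) :
    symMatEquiv S = ![S.1 0 0, S.1 1 1, S.1 2 2, S.1 0 1, S.1 0 2, S.1 1 2] := rfl

theorem symMatEquiv_symm_apply_coe (c : Fin 6 → ℝ) :
    (symMatEquiv.symm c : Matrix (Fin 3) (Fin 3) ℝ) =
      !![c 0, c 3, c 4; c 3, c 1, c 5; c 4, c 5, c 2] := rfl

theorem finrank_symMat : Module.finrank ℝ symMat = 6 := by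
  simp [symMatEquiv.finrank_eq]

def epsContractionMatrix (g : Matrix (Fin 3) (Fin 3) ℝ) : Matrix (Fin 6) (Fin 6) ℝ :=
  !![0, g 2 2, g 1 1, 0, 0, -2 * g 1 2;
     g 2 2, 0, g 0 0, 0, -2 * g 0 2, 0;
     g 1 1, g 0 0, 0, -2 * g 0 1, 0, 0;
     0, 0, -g 0 1, -g 2 2, g 1 2, g 0 2;
     0, -g 0 2, 0, g 1 2, -g 1 1, g 0 1;
     -g 1 2, 0, 0, g 0 2, g 0 1, -g 0 0]

theorem symContraction_conj_symMatEquiv {g : Matrix (Fin 3) (Fin 3) ℝ} (hg : g.IsSymm) :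
    (symMatEquiv : symMat →ₗ[ℝ] Fin 6 → ℝ) ∘ₗ symContraction hg ∘ₗ
      (symMatEquiv.symm : (Fin 6 → ℝ) →ₗ[ℝ] symMat) = toLin' (epsContractionMatrix g) := by
  refine LinearMap.ext fun x => funext fun i => ?_
  simp only [LinearMap.comp_apply, LinearEquiv.coe_coe, symMatEquiv_apply,
    symContraction_apply_coe, symMatEquiv_symm_apply_coe, epsContraction_apply, toLin'_apply,
    mulVec, dotProduct, Fin.sum_univ_three, Fin.sum_univ_six, epsContractionMatrix]
  fin_cases i <;> simp [lev, hg.apply 0 1, hg.apply 0 2, hg.apply 1 2] <;> ring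

theorem det_epsContractionMatrix {g : Matrix (Fin 3) (Fin 3) ℝ} (hg : g.IsSymm) :
    (epsContractionMatrix g).det = -2 * g.det ^ 2 := by
  rw [det_fin_three, hg.apply 0 1, hg.apply 0 2, hg.apply 1 2, epsContractionMatrix]
  simp [det_succ_row_zero, Fin.sum_univ_succ, Fin.succAbove]
  ring

theorem det_symContraction {g : Matrix (Fin 3) (Fin 3) ℝ} (hg : g.IsSymm) :
    LinearMap.det (symContraction hg) = -2 * g.det ^ 2 := by
  rw [← LinearMap.det_conj (symContraction hg) symMatEquiv, symContraction_conj_symMatEquiv,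
    LinearMap.det_toLin', det_epsContractionMatrix hg]

/-- Let `g` be a real symmetric 3×3 matrix and `V` a real number.  The endomorphism `Φ`
of the 6-dimensional space of symmetric 3×3 matrices defined by
`Φ(S)_{uv} = V ∑_{k,l,i,j} ε_{kiu} ε_{ljv} g_{kl} S_{ij}` has determinant
`det Φ = −2 V⁶ (det g)²`; in particular `Φ` is invertible iff `V ≠ 0` and `g` is
invertible. -/
theorem det_symmetric_endomorphism (g : Matrix (Fin 3) (Fin 3) ℝ) (hg : g.IsSymm) (V : ℝ) :
    ∃ Φ : symMat →ₗ[ℝ] symMat,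
      (∀ S : symMat, ∀ u v : Fin 3,
        ((Φ S : Matrix (Fin 3) (Fin 3) ℝ)) u v =
          V * ∑ k : Fin 3, ∑ l : Fin 3, ∑ i : Fin 3, ∑ j : Fin 3,
            lev k i u * lev l j v * g k l * (S : Matrix (Fin 3) (Fin 3) ℝ) i j) ∧
      LinearMap.det Φ = -2 * V ^ 6 * g.det ^ 2 ∧
      (Function.Bijective Φ ↔ (V ≠ 0 ∧ IsUnit g)) := by
  have hdet : LinearMap.det (V • symContraction hg) = -2 * V ^ 6 * g.det ^ 2 := by
    rw [LinearMap.det_smul, finrank_symMat, det_symContraction]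
    ring
  refine ⟨V • symContraction hg, fun S u v => rfl, hdet, ?_⟩
  rw [← Module.End.isUnit_iff, LinearMap.isUnit_iff_isUnit_det, hdet, isUnit_iff_ne_zero,
    isUnit_iff_isUnit_det, isUnit_iff_ne_zero]
  simp
end
end

section
/- Suppose the so(4)-valued fields B_{0i}, Π^i (i = 1,2,3) satisfy the simplicity constraints and 𝒱 ≠ 0. Define the real 6×6 matrices K and L by K^{(ε)a}_i := B^{(ε)a}_{0i}, K^{(ε)a}_{3+i} := Π^{(ε)a,i}, L^{3+i}_{(ε)a} := (3ε/𝒱) B^{(ε)a}_{0i}, and L^i_{(ε)a} := (3ε/𝒱) Π^{(ε)a,i} (i = 1,2,3), where rows/columns are indexed by {1,…,6} and by the six pairs (ε,a). Then L K = 𝟙₆ and K L = 𝟙₆; the relation K L = 𝟙₆ reads explicitly Σ_k ( Π^{(ε)a,k} B^{(ε')b}_{0k} + Π^{(ε')b,k} B^{(ε)a}_{0k} ) = (ε/3) 𝒱 δ_{ab} δ_{εε'} for all ε, ε' ∈ {+1,−1} and a, b ∈ {1,2,3}. -/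
noncomputable section

/-- The sign `ε ∈ {+1, −1}` attached to the selfdual (`0`) and anti-selfdual (`1`)
labels of `so(4)`. -/
def sgn : Fin 2 → ℝ := fun ε => if ε = 0 then 1 else -1

/-- An element of `so(4)` in the selfdual/anti-selfdual basis is a family of components
`x^{(ε)a}`, `ε ∈ {+1,−1}`, `a ∈ {1,2,3}`. -/
abbrev so4 : Type := Fin 2 → Fin 3 → ℝ

/-- The first invariant bilinear form `⟨x,y⟩ = ∑_{ε,a} x^{(ε)a} y^{(ε)a}`. -/
def ip (x y : so4) : ℝ := ∑ ε : Fin 2, ∑ a : Fin 3, x ε a * y ε a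

/-- The second invariant bilinear form `≺x,y≻ = ∑_{ε,a} ε x^{(ε)a} y^{(ε)a}`. -/
def ipS (x y : so4) : ℝ := ∑ ε : Fin 2, ∑ a : Fin 3, sgn ε * x ε a * y ε a

/-- The Lie bracket of `so(4)` in the selfdual/anti-selfdual basis:
`[x,y]^{(ε)a} = ∑_{b,c} ε_{abc} x^{(ε)b} y^{(ε)c}`. -/
def so4bracket (x y : so4) : so4 :=
  fun ε a => ∑ b : Fin 3, ∑ c : Fin 3, lev a b c * x ε b * y ε c

/-- The four-dimensional volume `𝒱 = ∑_k ≺B_{0k}, Π^k≻`. -/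
def vol (B0 Pi' : Fin 3 → so4) : ℝ := ∑ k : Fin 3, ipS (B0 k) (Pi' k)

/-- The simplicity constraints: `≺B_{0i},B_{0j}≻ = 0`,
`≺B_{0j},Π^i≻ = (1/3) δ^i_j 𝒱` and `≺Π^i,Π^j≻ = 0`. -/
def Simplicity (B0 Pi' : Fin 3 → so4) : Prop :=
  (∀ i j, ipS (B0 i) (B0 j) = 0) ∧
  (∀ i j, ipS (B0 j) (Pi' i) = if i = j then vol B0 Pi' / 3 else 0) ∧
  (∀ i j, ipS (Pi' i) (Pi' j) = 0)

/-- The spatial Urbantke metrics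
`g^{(ε)}_{ij} = (1/𝒱) ∑ ε_{abc} ½(ε_{mir} B^{(ε)a}_{0j} + ε_{mjr} B^{(ε)a}_{0i}) Π^{(ε)b,m} Π^{(ε)c,r}`. -/
def urbantke (B0 Pi' : Fin 3 → so4) (ε : Fin 2) (i j : Fin 3) : ℝ :=
  (1 / vol B0 Pi') * ∑ a : Fin 3, ∑ b : Fin 3, ∑ c : Fin 3, ∑ m : Fin 3, ∑ r : Fin 3,
    lev a b c * ((lev m i r * B0 j ε a + lev m j r * B0 i ε a) / 2) * Pi' m ε b * Pi' r ε c

/-- The Dirac-matrix block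
`G^{uvij} = ¼ ∑_r ( ε^{uri}⟨Π^v,[Π^j,B_{0r}]⟩ + ε^{urj}⟨Π^v,[Π^i,B_{0r}]⟩
          + ε^{vri}⟨Π^u,[Π^j,B_{0r}]⟩ + ε^{vrj}⟨Π^u,[Π^i,B_{0r}]⟩ )`. -/
def Gtensor (B0 Pi' : Fin 3 → so4) (u v i j : Fin 3) : ℝ :=
  (1 / 4) * ∑ r : Fin 3,
    (lev u r i * ip (Pi' v) (so4bracket (Pi' j) (B0 r)) +
     lev u r j * ip (Pi' v) (so4bracket (Pi' i) (B0 r)) +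
     lev v r i * ip (Pi' u) (so4bracket (Pi' j) (B0 r)) +
     lev v r j * ip (Pi' u) (so4bracket (Pi' i) (B0 r)))

theorem ipS_comm (x y : so4) : ipS x y = ipS y x := by
  unfold ipS
  refine Finset.sum_congr rfl fun ε _ => Finset.sum_congr rfl fun a _ => by ring

/-- Under the simplicity constraints with `𝒱 ≠ 0`, the 6×6 matrices
`K^{(ε)a}_i = B^{(ε)a}_{0i}`, `K^{(ε)a}_{3+i} = Π^{(ε)a,i}` and
`L^{3+i}_{(ε)a} = (3ε/𝒱) B^{(ε)a}_{0i}`, `L^i_{(ε)a} = (3ε/𝒱) Π^{(ε)a,i}`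
are mutually inverse: `L K = 𝟙₆` and `K L = 𝟙₆`; the latter reads explicitly
`∑_k (Π^{(ε)a,k} B^{(ε')b}_{0k} + Π^{(ε')b,k} B^{(ε)a}_{0k}) = (ε/3) 𝒱 δ_{ab} δ_{εε'}`.
(The index set `{1,…,6}` is realized as `Fin 3 ⊕ Fin 3`, `i ↦ inl i`, `3+i ↦ inr i`.) -/
theorem weak_inverse_KL (B0 Pi' : Fin 3 → so4)
    (hsimp : Simplicity B0 Pi') (hV : vol B0 Pi' ≠ 0)
    (K : Matrix (Fin 2 × Fin 3) (Fin 3 ⊕ Fin 3) ℝ)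
    (L : Matrix (Fin 3 ⊕ Fin 3) (Fin 2 × Fin 3) ℝ)
    (hK : ∀ ε a i, K (ε, a) (Sum.inl i) = B0 i ε a ∧ K (ε, a) (Sum.inr i) = Pi' i ε a)
    (hL : ∀ ε a i, L (Sum.inr i) (ε, a) = (3 * sgn ε / vol B0 Pi') * B0 i ε a ∧
                   L (Sum.inl i) (ε, a) = (3 * sgn ε / vol B0 Pi') * Pi' i ε a) :
    L * K = 1 ∧ K * L = 1 ∧
    (∀ (ε ε' : Fin 2) (a b : Fin 3),
      ∑ k : Fin 3, (Pi' k ε a * B0 k ε' b + Pi' k ε' b * B0 k ε a) =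
        if ε = ε' ∧ a = b then (sgn ε / 3) * vol B0 Pi' else 0) := by

  obtain ⟨hBB, hBP, hPP⟩ := hsimp
  set V := vol B0 Pi' with hVdef
  have key : ∀ (X Y : Fin 3 → so4) (i j : Fin 3),
      (∑ ε : Fin 2, ∑ a : Fin 3, (3 * sgn ε / V * X i ε a) * Y j ε a)
        = (3 / V) * ipS (Y j) (X i) := by
    intro X Y i j
    rw [ipS, Finset.mul_sum]
    refine Finset.sum_congr rfl fun ε _ => ?_
    rw [Finset.mul_sum]
    refine Finset.sum_congr rfl fun a _ => ?_
    ring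
  have hLK : L * K = 1 := by
    ext x y
    cases x with
    | inl i =>
      cases y with
      | inl j =>
        rw [Matrix.mul_apply, Fintype.sum_prod_type]
        simp only [(hL _ _ _).2, (hK _ _ _).1, Matrix.one_apply, Sum.inl.injEq]
        rw [key Pi' B0 i j, hBP i j]
        by_cases h : i = j <;> simp [h] <;> exact hV
      | inr j =>
        rw [Matrix.mul_apply, Fintype.sum_prod_type]
        simp only [(hL _ _ _).2, (hK _ _ _).2, Matrix.one_apply]
        rw [key Pi' Pi' i j, hPP j i]
        simp
    | inr i =>
      cases y with
      | inl j =>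
        rw [Matrix.mul_apply, Fintype.sum_prod_type]
        simp only [(hL _ _ _).1, (hK _ _ _).1, Matrix.one_apply]
        rw [key B0 B0 i j, ipS_comm, hBB i j]
        simp
      | inr j =>
        rw [Matrix.mul_apply, Fintype.sum_prod_type]
        simp only [(hL _ _ _).1, (hK _ _ _).2, Matrix.one_apply, Sum.inr.injEq]
        rw [key B0 Pi' i j, ipS_comm, hBP j i]
        by_cases h : j = i
        · subst h; simp; exact hV
        · have h' : ¬ i = j := fun hh => h hh.symm
          simp [h, h']
  have hKL : K * L = 1 :=
    (Matrix.mul_eq_one_comm_of_equiv (Fintype.equivOfCardEq (by simp))).mp hLK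
  refine ⟨hLK, hKL, ?_⟩
  intro ε ε' a b
  have h := congrArg (fun M => M (ε, a) (ε', b)) hKL
  simp only [Matrix.mul_apply, Fintype.sum_sum_type, Matrix.one_apply] at h
  simp only [(hK _ _ _).1, (hK _ _ _).2, (hL _ _ _).1, (hL _ _ _).2] at h
  have hs : sgn ε' ≠ 0 := by fin_cases ε' <;> norm_num [sgn]
  have hc : (3 * sgn ε' / V) ≠ 0 := by
    apply div_ne_zero _ hV
    exact mul_ne_zero (by norm_num) hs
  apply mul_left_cancel₀ hc
  rw [Finset.mul_sum]
  have lhs_eq : ∀ k : Fin 3,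
      3 * sgn ε' / V * (Pi' k ε a * B0 k ε' b + Pi' k ε' b * B0 k ε a)
        = B0 k ε a * (3 * sgn ε' / V * Pi' k ε' b)
          + Pi' k ε a * (3 * sgn ε' / V * B0 k ε' b) := fun k => by ring
  rw [Finset.sum_congr rfl fun k _ => lhs_eq k, Finset.sum_add_distrib, h]
  by_cases hee : ε = ε'
  · subst hee
    by_cases hab : a = b
    · subst hab
      have : sgn ε * sgn ε = 1 := by fin_cases ε <;> norm_num [sgn]
      simp [Prod.ext_iff]
      field_simp
      linear_combination (-1) * this
    · simp [Prod.ext_iff, hab]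
  · simp [Prod.ext_iff, hee]
end
end

section
/- There do not exist invertible real 4×4 matrices e = (e^I_μ) and f = (f^I_μ) and signs s, t ∈ {+1,−1} such that s (e^I_μ e^J_ν − e^I_ν e^J_μ) = (t/2) Σ_{K,L} ε^{IJKL} (f^K_μ f^L_ν − f^K_ν f^L_μ) for all I,J,μ,ν ∈ {0,1,2,3}. In other words, a non-degenerate B-field in the topological sector can never equal a non-degenerate B-field in the gravitational sector: the four sectors of non-degenerate solutions of the simplicity constraints are disjoint. -/
noncomputable section

/-- The Levi-Civita symbol on `{0,1,2,3}` (indexed by `Fin 4`), with `ε 0 1 2 3 = 1`. -/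
def eps4 (i j k l : Fin 4) : ℝ :=
  (((j.val : ℝ) - i.val) * ((k.val : ℝ) - i.val) * ((l.val : ℝ) - i.val) *
    ((k.val : ℝ) - j.val) * ((l.val : ℝ) - j.val) * ((l.val : ℝ) - k.val)) / 12

/-- `eps4` is antisymmetric in its last two arguments. -/
lemma eps4_swap34 (i j k l : Fin 4) : eps4 i j l k = - eps4 i j k l := by
  unfold eps4; ring

/-- Reordering a quadruple sum over `Fin 4`. -/
lemma sum4_swap {α : Type*} [AddCommMonoid α] (Q : Fin 4 → Fin 4 → Fin 4 → Fin 4 → α) :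
    (∑ μ : Fin 4, ∑ ν : Fin 4, ∑ K : Fin 4, ∑ L : Fin 4, Q K L μ ν)
      = ∑ K : Fin 4, ∑ L : Fin 4, ∑ μ : Fin 4, ∑ ν : Fin 4, Q K L μ ν := by
  calc (∑ μ : Fin 4, ∑ ν : Fin 4, ∑ K : Fin 4, ∑ L : Fin 4, Q K L μ ν)
      = ∑ μ : Fin 4, ∑ K : Fin 4, ∑ ν : Fin 4, ∑ L : Fin 4, Q K L μ ν :=
        Finset.sum_congr rfl fun μ _ => Finset.sum_comm
    _ = ∑ K : Fin 4, ∑ μ : Fin 4, ∑ ν : Fin 4, ∑ L : Fin 4, Q K L μ ν := Finset.sum_comm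
    _ = ∑ K : Fin 4, ∑ μ : Fin 4, ∑ L : Fin 4, ∑ ν : Fin 4, Q K L μ ν :=
        Finset.sum_congr rfl fun K _ => Finset.sum_congr rfl fun μ _ => Finset.sum_comm
    _ = ∑ K : Fin 4, ∑ L : Fin 4, ∑ μ : Fin 4, ∑ ν : Fin 4, Q K L μ ν :=
        Finset.sum_congr rfl fun K _ => Finset.sum_comm

/-- There are no invertible real 4×4 matrices `e`, `f` and signs `s`, `t` such that
`s (e^I_μ e^J_ν − e^I_ν e^J_μ) = (t/2) ∑_{K,L} ε^{IJKL} (f^K_μ f^L_ν − f^K_ν f^L_μ)` for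
all `I,J,μ,ν`: a non-degenerate B-field in the topological sector can never equal a
non-degenerate B-field in the gravitational sector, so the four sectors of
non-degenerate solutions of the simplicity constraints are disjoint. -/
theorem topological_and_gravitational_sectors_disjoint :
    ¬ ∃ (e f : Matrix (Fin 4) (Fin 4) ℝ) (s t : ℝ),
        e.det ≠ 0 ∧ f.det ≠ 0 ∧ (s = 1 ∨ s = -1) ∧ (t = 1 ∨ t = -1) ∧
        (∀ I J μ ν : Fin 4,
          s * (e I μ * e J ν - e I ν * e J μ) =
            (t / 2) * ∑ K : Fin 4, ∑ L : Fin 4,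
              eps4 I J K L * (f K μ * f L ν - f K ν * f L μ)) := by
  rintro ⟨e, f, s, t, hde, hdf, hs, ht, h⟩
  -- invert f
  have hf : IsUnit f.det := isUnit_iff_ne_zero.mpr hdf
  have hfi : f * f⁻¹ = 1 := Matrix.mul_nonsing_inv f hf
  set F := f⁻¹ with hFdef
  set g := e * F with hgdef
  have hdelta : ∀ K a : Fin 4, (∑ μ : Fin 4, f K μ * F μ a) = if K = a then 1 else 0 := by
    intro K a
    have h1 := congrArg (fun M : Matrix (Fin 4) (Fin 4) ℝ => M K a) hfi
    simpa [Matrix.mul_apply, Matrix.one_apply] using h1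
  have hg' : ∀ I a : Fin 4, g I a = ∑ μ : Fin 4, e I μ * F μ a := by
    intro I a; simp [hgdef, Matrix.mul_apply]
  -- evaluation of a double sum against two Kronecker deltas
  have e1 : ∀ (c : Fin 4 → Fin 4 → ℝ) (a b : Fin 4),
      (∑ K : Fin 4, ∑ L : Fin 4,
        c K L * ((if K = a then (1:ℝ) else 0) * (if L = b then (1:ℝ) else 0))) = c a b := by
    intro c a b
    simp [mul_ite, mul_one, mul_zero, ite_mul, zero_mul, Finset.sum_ite_eq']
  -- key algebraic consequence: with g = e f⁻¹, s (g∧g) = t ε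
  have key : ∀ I J a b : Fin 4,
      s * (g I a * g J b - g I b * g J a) = t * eps4 I J a b := by
    intro I J a b
    have A1 : g I a * g J b = ∑ μ : Fin 4, ∑ ν : Fin 4,
        F μ a * F ν b * (e I μ * e J ν) := by
      rw [hg' I a, hg' J b, Finset.sum_mul_sum]
      exact Finset.sum_congr rfl fun μ _ => Finset.sum_congr rfl fun ν _ => by ring
    have A2 : g I b * g J a = ∑ μ : Fin 4, ∑ ν : Fin 4,
        F μ a * F ν b * (e I ν * e J μ) := by
      rw [hg' I b, hg' J a, Finset.sum_mul_sum, Finset.sum_comm]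
      exact Finset.sum_congr rfl fun μ _ => Finset.sum_congr rfl fun ν _ => by ring
    have Fstep : ∀ K L : Fin 4,
        (∑ μ : Fin 4, ∑ ν : Fin 4, (t / 2) * eps4 I J K L *
            (f K μ * F μ a * (f L ν * F ν b) - f L μ * F μ a * (f K ν * F ν b)))
          = (t / 2) * eps4 I J K L *
            ((∑ μ : Fin 4, f K μ * F μ a) * (∑ ν : Fin 4, f L ν * F ν b)
              - (∑ μ : Fin 4, f L μ * F μ a) * (∑ ν : Fin 4, f K ν * F ν b)) := by
      intro K L
      rw [Finset.sum_mul_sum, Finset.sum_mul_sum, ← Finset.sum_sub_distrib, Finset.mul_sum]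
      refine Finset.sum_congr rfl fun μ _ => ?_
      rw [← Finset.sum_sub_distrib, Finset.mul_sum]
    calc s * (g I a * g J b - g I b * g J a)
        = ∑ μ : Fin 4, ∑ ν : Fin 4,
            F μ a * F ν b * (s * (e I μ * e J ν - e I ν * e J μ)) := by
          rw [A1, A2, ← Finset.sum_sub_distrib, Finset.mul_sum]
          refine Finset.sum_congr rfl fun μ _ => ?_
          rw [← Finset.sum_sub_distrib, Finset.mul_sum]
          exact Finset.sum_congr rfl fun ν _ => by ring
      _ = ∑ μ : Fin 4, ∑ ν : Fin 4, F μ a * F ν b *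
            ((t / 2) * ∑ K : Fin 4, ∑ L : Fin 4,
              eps4 I J K L * (f K μ * f L ν - f K ν * f L μ)) :=
          Finset.sum_congr rfl fun μ _ => Finset.sum_congr rfl fun ν _ => by
            rw [h I J μ ν]
      _ = ∑ μ : Fin 4, ∑ ν : Fin 4, ∑ K : Fin 4, ∑ L : Fin 4,
            (t / 2) * eps4 I J K L *
              (f K μ * F μ a * (f L ν * F ν b) - f L μ * F μ a * (f K ν * F ν b)) := by
          refine Finset.sum_congr rfl fun μ _ => Finset.sum_congr rfl fun ν _ => ?_
          rw [Finset.mul_sum, Finset.mul_sum]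
          refine Finset.sum_congr rfl fun K _ => ?_
          rw [Finset.mul_sum, Finset.mul_sum]
          exact Finset.sum_congr rfl fun L _ => by ring
      _ = ∑ K : Fin 4, ∑ L : Fin 4, ∑ μ : Fin 4, ∑ ν : Fin 4,
            (t / 2) * eps4 I J K L *
              (f K μ * F μ a * (f L ν * F ν b) - f L μ * F μ a * (f K ν * F ν b)) :=
          sum4_swap (fun K L μ ν => (t / 2) * eps4 I J K L *
              (f K μ * F μ a * (f L ν * F ν b) - f L μ * F μ a * (f K ν * F ν b)))
      _ = ∑ K : Fin 4, ∑ L : Fin 4, (t / 2) * eps4 I J K L *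
            ((∑ μ : Fin 4, f K μ * F μ a) * (∑ ν : Fin 4, f L ν * F ν b)
              - (∑ μ : Fin 4, f L μ * F μ a) * (∑ ν : Fin 4, f K ν * F ν b)) :=
          Finset.sum_congr rfl fun K _ => Finset.sum_congr rfl fun L _ => Fstep K L
      _ = ∑ K : Fin 4, ∑ L : Fin 4, (t / 2) * eps4 I J K L *
            ((if K = a then (1:ℝ) else 0) * (if L = b then (1:ℝ) else 0)
              - (if L = a then (1:ℝ) else 0) * (if K = b then (1:ℝ) else 0)) := by
          refine Finset.sum_congr rfl fun K _ => Finset.sum_congr rfl fun L _ => ?_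
          rw [hdelta K a, hdelta L b, hdelta K b, hdelta L a]
      _ = (∑ K : Fin 4, ∑ L : Fin 4, ((t / 2) * eps4 I J K L) *
              ((if K = a then (1:ℝ) else 0) * (if L = b then (1:ℝ) else 0)))
          - (∑ K : Fin 4, ∑ L : Fin 4, ((t / 2) * eps4 I J K L) *
              ((if K = b then (1:ℝ) else 0) * (if L = a then (1:ℝ) else 0))) := by
          rw [← Finset.sum_sub_distrib]
          refine Finset.sum_congr rfl fun K _ => ?_
          rw [← Finset.sum_sub_distrib]
          exact Finset.sum_congr rfl fun L _ => by ring
      _ = (t / 2) * eps4 I J a b - (t / 2) * eps4 I J b a := by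
          rw [e1 (fun K L => (t / 2) * eps4 I J K L) a b,
            e1 (fun K L => (t / 2) * eps4 I J K L) b a]
      _ = t * eps4 I J a b := by
          rw [show eps4 I J b a = - eps4 I J a b from eps4_swap34 I J a b]; ring
  -- now derive a contradiction from the purely algebraic system
  have hs2 : s * s = 1 := by rcases hs with rfl | rfl <;> norm_num
  have hcne : s * t ≠ 0 := by
    rcases hs with rfl | rfl <;> rcases ht with rfl | rfl <;> norm_num
  -- the wedge equations, with s multiplied through
  have key' : ∀ I J a b : Fin 4,
      g I a * g J b - g I b * g J a = s * t * eps4 I J a b := by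
    intro I J a b
    have h2 := congrArg (fun x => s * x) (key I J a b)
    simpa only [← mul_assoc, hs2, one_mul] using h2
  -- values of the Fin-4 coercions
  have w0 : (0 : Fin 4).val = 0 := rfl
  have w1 : (1 : Fin 4).val = 1 := rfl
  have w2 : (2 : Fin 4).val = 2 := rfl
  have w3 : (3 : Fin 4).val = 3 := rfl
  -- eps4 values needed
  have v1 : eps4 0 1 2 3 = 1 := by simp only [eps4, w0, w1, w2, w3]; norm_num
  have v2 : eps4 0 1 1 3 = 0 := by simp only [eps4, w0, w1, w2, w3]; norm_num
  have v3 : eps4 0 1 1 2 = 0 := by simp only [eps4, w0, w1, w2, w3]; norm_num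
  have v4 : eps4 0 2 3 1 = 1 := by simp only [eps4, w0, w1, w2, w3]; norm_num
  have v5 : eps4 0 2 2 1 = 0 := by simp only [eps4, w0, w1, w2, w3]; norm_num
  have v6 : eps4 0 2 2 3 = 0 := by simp only [eps4, w0, w1, w2, w3]; norm_num
  have v7 : eps4 0 3 1 2 = 1 := by simp only [eps4, w0, w1, w2, w3]; norm_num
  -- instances of key'
  have k23 := key' 0 1 2 3; rw [v1, mul_one] at k23
  have k13 := key' 0 1 1 3; rw [v2, mul_zero] at k13
  have k12 := key' 0 1 1 2; rw [v3, mul_zero] at k12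
  have m31 := key' 0 2 3 1; rw [v4, mul_one] at m31
  have m21 := key' 0 2 2 1; rw [v5, mul_zero] at m21
  have m23 := key' 0 2 2 3; rw [v6, mul_zero] at m23
  have n12 := key' 0 3 1 2; rw [v7, mul_one] at n12
  -- g 0 1 = 0
  have ha1 : g 0 1 = 0 := by
    have h0 : g 0 1 * (s * t) = 0 := by
      linear_combination (-(g 0 1)) * k23 + g 0 2 * k13 - g 0 3 * k12
    exact (mul_eq_zero.mp h0).resolve_right hcne
  -- g 0 2 = 0
  have ha2 : g 0 2 = 0 := by
    have h0 : g 0 2 * (s * t) = 0 := by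
      linear_combination (-(g 0 2)) * m31 + g 0 3 * m21 - g 0 1 * m23
    exact (mul_eq_zero.mp h0).resolve_right hcne
  -- contradiction with key' 0 3 1 2
  apply hcne
  linear_combination -n12 + g 3 2 * ha1 - g 3 1 * ha2
end
end
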